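/- Suppose the monotone-density assumption holds, the loss ℓ is (C,α)-Hölder, and the trigger η satisfies ‖η‖₂² ≥ 4 ηᵀ(m₁−m₀). Then for every measurable f : ℝ^p → [0,1], the backdoor risk satisfies ℓ^bd(f) ≤ ρ^{-1} ℓ^poi(f) + ρ^{−α} C ( max_{i=0,1} h_i^η(‖η‖₂/4) )^α. -/

import Mathlib

open MeasureTheory Real
open scoped RealInnerProductSpace

noncomputable section

/-- The clean input density `μ^cl_X(x) = λ ν₁(x) + (1-λ) ν₀(x)`. -/
def muCl {p : ℕ} (lam : ℝ) (ν : Fin 2 → EuclideanSpace ℝ (Fin p) → ℝ)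
    (x : EuclideanSpace ℝ (Fin p)) : ℝ :=
  lam * ν 1 x + (1 - lam) * ν 0 x

/-- The backdoor input density `μ^bd_X(x) = λ ν₁(x-η) + (1-λ) ν₀(x-η)`. -/
def muBd {p : ℕ} (lam : ℝ) (ν : Fin 2 → EuclideanSpace ℝ (Fin p) → ℝ)
    (η x : EuclideanSpace ℝ (Fin p)) : ℝ :=
  lam * ν 1 (x - η) + (1 - lam) * ν 0 (x - η)

/-- The poisoned input density `μ^poi_X = (1-ρ) μ^cl_X + ρ μ^bd_X`. -/
def muPoi {p : ℕ} (lam ρ : ℝ) (ν : Fin 2 → EuclideanSpace ℝ (Fin p) → ℝ)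
    (η x : EuclideanSpace ℝ (Fin p)) : ℝ :=
  (1 - ρ) * muCl lam ν x + ρ * muBd lam ν η x

/-- The clean regression function `f^cl_*(x) = λ ν₁(x) / μ^cl_X(x)`. -/
def fCl {p : ℕ} (lam : ℝ) (ν : Fin 2 → EuclideanSpace ℝ (Fin p) → ℝ)
    (x : EuclideanSpace ℝ (Fin p)) : ℝ :=
  lam * ν 1 x / muCl lam ν x

/-- The poisoned regression function `f^poi_*(x) = (1-ρ) λ ν₁(x) / μ^poi_X(x)`. -/
def fPoi {p : ℕ} (lam ρ : ℝ) (ν : Fin 2 → EuclideanSpace ℝ (Fin p) → ℝ)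
    (η x : EuclideanSpace ℝ (Fin p)) : ℝ :=
  (1 - ρ) * lam * ν 1 x / muPoi lam ρ ν η x

/-- The tail function `h_i^η(r) = ∫_{x : |(x-m)ᵀη| ≥ r ‖η‖₂} ν(x) dx`. -/
def tailProb {p : ℕ} (ν : EuclideanSpace ℝ (Fin p) → ℝ) (m η : EuclideanSpace ℝ (Fin p))
    (r : ℝ) : ℝ :=
  ∫ x in {x : EuclideanSpace ℝ (Fin p) | r * ‖η‖ ≤ |⟪x - m, η⟫|}, ν x

/-- A Lebesgue probability density on `ℝ^p`. -/
def IsProbDensity {p : ℕ} (ν : EuclideanSpace ℝ (Fin p) → ℝ) : Prop :=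
  Measurable ν ∧ (∀ x, 0 ≤ ν x) ∧ Integrable ν ∧ (∫ x, ν x) = 1

/-- `m` is the mean of the probability density `ν`. -/
def HasCondMean {p : ℕ} (ν : EuclideanSpace ℝ (Fin p) → ℝ)
    (m : EuclideanSpace ℝ (Fin p)) : Prop :=
  (∫ x, ν x • x) = m

/-- Monotone-density assumption: the density decreases along any ray from its mean. -/
def MonotoneDensity {p : ℕ} (ν : EuclideanSpace ℝ (Fin p) → ℝ)
    (m : EuclideanSpace ℝ (Fin p)) : Prop :=
  ∀ (η : EuclideanSpace ℝ (Fin p)) (c1 c2 : ℝ), 0 < c1 → c1 < c2 →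
    ν (m - c2 • η) ≤ ν (m - c1 • η)

/-- The loss `ℓ` is `(C,α)`-Hölder on `[0,1]²`. -/
def IsHolderLoss (ℓ : ℝ → ℝ → ℝ) (C α : ℝ) : Prop :=
  ∀ x ∈ Set.Icc (0:ℝ) 1, ∀ y ∈ Set.Icc (0:ℝ) 1, ∀ z ∈ Set.Icc (0:ℝ) 1,
    |ℓ x y - ℓ x z| ≤ C * |y - z| ^ α ∧ |ℓ x y - ℓ z y| ≤ C * |x - z| ^ α

/-!
Write `g = f^poi_*`. As `f^bd_* ≡ 0`, Hölder continuity of `ℓ` in the label gives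
`ℓ(f, 0) ≤ ℓ(f, g) + C g^α` pointwise. Integrating against `μ^bd` and using `ρ μ^bd ≤ μ^poi`
bounds the first term by `ρ⁻¹ ℓ^poi(f)`, and Jensen's inequality for the concave `t ↦ t^α`
bounds the second by `C (∫ g μ^bd)^α`. Finally `∫ g μ^bd ≤ ρ⁻¹ max_i h_i^η(‖η‖/4)`, by splitting
along the half-space `A = {x | ‖η‖²/4 ≤ ⟪x - m₁, η⟫}`: on `A` we have
`g μ^bd ≤ ρ⁻¹ g μ^poi = ρ⁻¹ (1 - ρ) λ ν₁` and `A` lies in the tail of `ν₁`; off `A` we use `g ≤ 1`,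
and `Aᶜ - η` lies in the tail of `ν₁` and, because `4 ηᵀ(m₁ - m₀) ≤ ‖η‖²`, in that of `ν₀`.
-/

open Set

section Integrals

variable {X : Type*} [MeasurableSpace X] {μ : Measure X}

theorem MeasureTheory.Integrable.mul_of_mem_Icc {w g : X → ℝ} (hw : Integrable w μ)
    (hg : Measurable g) (hg01 : ∀ x, g x ∈ Icc (0:ℝ) 1) :
    Integrable (fun x => g x * w x) μ :=
  hw.bdd_mul hg.aestronglyMeasurable (Filter.Eventually.of_forall fun x => by
    rw [Real.norm_of_nonneg (hg01 x).1]; exact (hg01 x).2)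

theorem integral_mul_le_const_mul_integral_mul {φ w u : X → ℝ} {c : ℝ} (hφ : ∀ x, 0 ≤ φ x)
    (hwu : ∀ x, w x ≤ c * u x) (hφw : Integrable (fun x => φ x * w x) μ)
    (hφu : Integrable (fun x => φ x * u x) μ) :
    ∫ x, φ x * w x ∂μ ≤ c * ∫ x, φ x * u x ∂μ := by
  rw [← integral_const_mul]
  exact integral_mono hφw (hφu.const_mul c) fun x =>
    (mul_le_mul_of_nonneg_left (hwu x) (hφ x)).trans_eq (mul_left_comm _ _ _)

theorem integral_rpow_mul_le_rpow_integral_mul {w g : X → ℝ} {α : ℝ} (hα0 : 0 ≤ α)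
    (hα1 : α ≤ 1) (hw : Measurable w) (hw0 : ∀ x, 0 ≤ w x) (hw1 : ∫ x, w x ∂μ = 1)
    (hg : Measurable g) (hg01 : ∀ x, g x ∈ Icc (0:ℝ) 1) :
    ∫ x, g x ^ α * w x ∂μ ≤ (∫ x, g x * w x ∂μ) ^ α := by
  set μw := μ.withDensity fun x => ((w x).toNNReal : ENNReal)
  have hμw : ∀ φ : X → ℝ, ∫ x, φ x ∂μw = ∫ x, φ x * w x ∂μ := fun φ => by
    rw [integral_withDensity_eq_integral_smul hw.real_toNNReal]
    simp only [NNReal.smul_def, Real.coe_toNNReal _ (hw0 _), smul_eq_mul, mul_comm]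
  have : IsProbabilityMeasure μw := ⟨by
    rw [withDensity_apply _ MeasurableSet.univ, Measure.restrict_univ]
    change ∫⁻ x, ENNReal.ofReal (w x) ∂μ = 1
    rw [← ofReal_integral_eq_lintegral_ofReal ?_ (Filter.Eventually.of_forall hw0), hw1,
      ENNReal.ofReal_one]
    exact Integrable.of_integral_ne_zero (by simp [hw1])⟩
  have hbdd : ∀ φ : X → ℝ, Measurable φ → (∀ x, φ x ∈ Icc (0:ℝ) 1) → Integrable φ μw :=
    fun φ hφ hφ01 => Integrable.of_bound hφ.aestronglyMeasurable 1
      (Filter.Eventually.of_forall fun x => by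
        rw [Real.norm_of_nonneg (hφ01 x).1]; exact (hφ01 x).2)
  rw [← hμw, ← hμw]
  exact (concaveOn_rpow hα0 hα1).le_map_integral
    (continuousOn_id.rpow_const fun _ _ => Or.inr hα0) isClosed_Ici
    (Filter.Eventually.of_forall fun x => (hg01 x).1) (hbdd g hg hg01)
    (hbdd _ (hg.pow_const α) fun x =>
      ⟨rpow_nonneg (hg01 x).1 _, rpow_le_one (hg01 x).1 (hg01 x).2 hα0⟩)

end Integrals

theorem setIntegral_comp_sub_le_of_preimage_subset {G : Type*} [MeasurableSpace G] [AddGroup G]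
    [MeasurableAdd G] {μ : Measure G} [μ.IsAddRightInvariant] {ν : G → ℝ} (hν0 : ∀ x, 0 ≤ ν x)
    (hν : Integrable ν μ) {η : G} {B S : Set G} (hBS : (· + η) ⁻¹' B ⊆ S) :
    ∫ x in B, ν (x - η) ∂μ ≤ ∫ x in S, ν x ∂μ := by
  rw [← (measurePreserving_add_right μ η).setIntegral_preimage_emb
    (measurableEmbedding_addRight η)]
  simp only [add_sub_cancel_right]
  exact setIntegral_mono_set hν.integrableOn (Filter.Eventually.of_forall hν0) hBS.eventuallyLE

namespace IsHolderLoss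

variable {ℓ : ℝ → ℝ → ℝ} {C α : ℝ}

theorem continuousOn_uncurry (hℓ : IsHolderLoss ℓ C α) (hα : 0 < α) :
    ContinuousOn (Function.uncurry ℓ) (Icc 0 1 ×ˢ Icc 0 1) := by
  rintro ⟨x₀, y₀⟩ ⟨hx₀, hy₀⟩
  have hbound : ∀ q ∈ Icc (0:ℝ) 1 ×ˢ Icc (0:ℝ) 1,
      dist (Function.uncurry ℓ q) (ℓ x₀ y₀) ≤ C * |q.2 - y₀| ^ α + C * |q.1 - x₀| ^ α := by
    rintro ⟨x, y⟩ ⟨hx, hy⟩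
    rw [Real.dist_eq]
    calc |ℓ x y - ℓ x₀ y₀| ≤ |ℓ x y - ℓ x y₀| + |ℓ x y₀ - ℓ x₀ y₀| := abs_sub_le _ _ _
      _ ≤ _ := add_le_add (hℓ x hx y hy y₀ hy₀).1 (hℓ x hx y₀ hy₀ x₀ hx₀).2
  have hlim : Filter.Tendsto (fun q : ℝ × ℝ => C * |q.2 - y₀| ^ α + C * |q.1 - x₀| ^ α)
      (nhds (x₀, y₀)) (nhds 0) := by
    have hcont : Continuous fun q : ℝ × ℝ => C * |q.2 - y₀| ^ α + C * |q.1 - x₀| ^ α := by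
      fun_prop (disch := exact hα.le)
    simpa [Real.zero_rpow hα.ne'] using hcont.tendsto (x₀, y₀)
  exact tendsto_iff_dist_tendsto_zero.2 <| squeeze_zero'
    (Filter.Eventually.of_forall fun _ => dist_nonneg) (eventually_nhdsWithin_of_forall hbound)
    (hlim.mono_left nhdsWithin_le_nhds)

theorem exists_bound (hℓ : IsHolderLoss ℓ C α) (hα : 0 < α) :
    ∃ M, ∀ x ∈ Icc (0:ℝ) 1, ∀ y ∈ Icc (0:ℝ) 1, ‖ℓ x y‖ ≤ M := by
  obtain ⟨M, hM⟩ := (isCompact_Icc.prod isCompact_Icc).exists_bound_of_continuousOn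
    (hℓ.continuousOn_uncurry hα)
  exact ⟨M, fun x hx y hy => hM (x, y) ⟨hx, hy⟩⟩

theorem le_add_mul_rpow (hℓ : IsHolderLoss ℓ C α) {x y : ℝ} (hx : x ∈ Icc (0:ℝ) 1)
    (hy : y ∈ Icc (0:ℝ) 1) : ℓ x 0 ≤ ℓ x y + C * y ^ α := by
  have h := (hℓ x hx 0 ⟨le_rfl, zero_le_one⟩ y hy).1
  rw [zero_sub, abs_neg, abs_of_nonneg hy.1] at h
  linarith [le_abs_self (ℓ x 0 - ℓ x y)]

variable {X : Type*} [MeasurableSpace X] {μ : Measure X} {f g w : X → ℝ}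

theorem measurable_comp (hℓ : IsHolderLoss ℓ C α) (hα : 0 < α) (hf : Measurable f)
    (hg : Measurable g) (hf01 : ∀ x, f x ∈ Icc (0:ℝ) 1) (hg01 : ∀ x, g x ∈ Icc (0:ℝ) 1) :
    Measurable fun x => ℓ (f x) (g x) :=
  (hℓ.continuousOn_uncurry hα).domRestrict.measurable.comp
    ((hf.prodMk hg).subtype_mk (h := fun x => ⟨hf01 x, hg01 x⟩))

theorem integrable_mul (hℓ : IsHolderLoss ℓ C α) (hα : 0 < α) (hw : Integrable w μ)
    (hf : Measurable f) (hg : Measurable g) (hf01 : ∀ x, f x ∈ Icc (0:ℝ) 1)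
    (hg01 : ∀ x, g x ∈ Icc (0:ℝ) 1) :
    Integrable (fun x => ℓ (f x) (g x) * w x) μ :=
  let ⟨_, hM⟩ := hℓ.exists_bound hα
  hw.bdd_mul (hℓ.measurable_comp hα hf hg hf01 hg01).aestronglyMeasurable
    (Filter.Eventually.of_forall fun x => hM _ (hf01 x) _ (hg01 x))

theorem integral_le_add_integral_rpow_mul (hℓ : IsHolderLoss ℓ C α) (hα : 0 < α)
    (hw0 : ∀ x, 0 ≤ w x) (hw : Integrable w μ) (hf : Measurable f) (hg : Measurable g)
    (hf01 : ∀ x, f x ∈ Icc (0:ℝ) 1) (hg01 : ∀ x, g x ∈ Icc (0:ℝ) 1) :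
    ∫ x, ℓ (f x) 0 * w x ∂μ ≤ ∫ x, ℓ (f x) (g x) * w x ∂μ + C * ∫ x, g x ^ α * w x ∂μ := by
  have hfg := hℓ.integrable_mul hα hw hf hg hf01 hg01
  have hgα := hw.mul_of_mem_Icc (hg.pow_const α) fun x =>
    ⟨rpow_nonneg (hg01 x).1 _, rpow_le_one (hg01 x).1 (hg01 x).2 hα.le⟩
  rw [← integral_const_mul, ← integral_add hfg (hgα.const_mul C)]
  refine integral_mono (hℓ.integrable_mul hα hw hf measurable_const hf01
    fun _ => ⟨le_rfl, zero_le_one⟩) (hfg.add (hgα.const_mul C)) fun x => ?_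
  nlinarith [hℓ.le_add_mul_rpow (hf01 x) (hg01 x), hw0 x]

end IsHolderLoss

section Geometry

variable {E : Type*} [NormedAddCommGroup E] [InnerProductSpace ℝ E]

def triggerHalfspace (m η : E) : Set E := {x | ‖η‖ ^ 2 / 4 ≤ ⟪x - m, η⟫}

theorem measurableSet_triggerHalfspace [MeasurableSpace E] [OpensMeasurableSpace E] (m η : E) :
    MeasurableSet (triggerHalfspace m η) :=
  (isClosed_le continuous_const (by fun_prop)).measurableSet

theorem triggerHalfspace_subset (m η : E) :
    triggerHalfspace m η ⊆ {x | ‖η‖ / 4 * ‖η‖ ≤ |⟪x - m, η⟫|} := fun x hx =>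
  calc ‖η‖ / 4 * ‖η‖ = ‖η‖ ^ 2 / 4 := by ring
    _ ≤ ⟪x - m, η⟫ := hx
    _ ≤ |⟪x - m, η⟫| := le_abs_self _

theorem preimage_compl_triggerHalfspace_subset {m₀ m₁ η : E}
    (hη : 4 * ⟪η, m₁ - m₀⟫ ≤ ‖η‖ ^ 2) :
    (· + η) ⁻¹' (triggerHalfspace m₁ η)ᶜ ⊆ {x | ‖η‖ / 4 * ‖η‖ ≤ |⟪x - m₀, η⟫|} := by
  intro x hx
  have hx' : ⟪x + η - m₁, η⟫ < ‖η‖ ^ 2 / 4 := not_le.1 hx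
  have hsplit : ⟪x + η - m₁, η⟫ = ⟪x - m₀, η⟫ + ⟪η, η⟫ - ⟪m₁ - m₀, η⟫ := by
    simp only [inner_sub_left, inner_add_left]
    ring
  show ‖η‖ / 4 * ‖η‖ ≤ |⟪x - m₀, η⟫|
  nlinarith [neg_le_abs ⟪x - m₀, η⟫, real_inner_self_eq_norm_sq η, real_inner_comm η (m₁ - m₀)]

end Geometry

section Densities

variable {p : ℕ} {η : EuclideanSpace ℝ (Fin p)}

namespace IsProbDensity

variable {ν ν₀ ν₁ : EuclideanSpace ℝ (Fin p) → ℝ}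

theorem measurable (hν : IsProbDensity ν) : Measurable ν := hν.1

theorem nonneg (hν : IsProbDensity ν) (x : EuclideanSpace ℝ (Fin p)) : 0 ≤ ν x := hν.2.1 x

theorem integrable (hν : IsProbDensity ν) : Integrable ν := hν.2.2.1

theorem integral_eq_one (hν : IsProbDensity ν) : ∫ x, ν x = 1 := hν.2.2.2

theorem comp_sub_const (hν : IsProbDensity ν) (η : EuclideanSpace ℝ (Fin p)) :
    IsProbDensity fun x => ν (x - η) :=
  ⟨hν.measurable.comp (measurable_sub_const η), fun _ => hν.nonneg _,
    hν.integrable.comp_sub_right η, (integral_sub_right_eq_self ν η).trans hν.integral_eq_one⟩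

theorem mix (h₁ : IsProbDensity ν₁) (h₀ : IsProbDensity ν₀) {a b : ℝ} (ha : 0 ≤ a) (hb : 0 ≤ b)
    (hab : a + b = 1) : IsProbDensity fun x => a * ν₁ x + b * ν₀ x :=
  ⟨(h₁.measurable.const_mul a).add (h₀.measurable.const_mul b),
    fun x => add_nonneg (mul_nonneg ha (h₁.nonneg x)) (mul_nonneg hb (h₀.nonneg x)),
    (h₁.integrable.const_mul a).add (h₀.integrable.const_mul b), by
      rw [integral_add (h₁.integrable.const_mul a) (h₀.integrable.const_mul b),
        integral_const_mul, integral_const_mul, h₁.integral_eq_one, h₀.integral_eq_one,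
        mul_one, mul_one, hab]⟩

theorem setIntegral_triggerHalfspace_le_tailProb (hν : IsProbDensity ν)
    (m : EuclideanSpace ℝ (Fin p)) :
    ∫ x in triggerHalfspace m η, ν x ≤ tailProb ν m η (‖η‖ / 4) :=
  setIntegral_mono_set hν.integrable.integrableOn (Filter.Eventually.of_forall hν.nonneg)
    (triggerHalfspace_subset m η).eventuallyLE

theorem setIntegral_compl_triggerHalfspace_comp_sub_le_tailProb (hν : IsProbDensity ν)
    {m₀ m₁ : EuclideanSpace ℝ (Fin p)} (hη : 4 * ⟪η, m₁ - m₀⟫ ≤ ‖η‖ ^ 2) :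
    ∫ x in (triggerHalfspace m₁ η)ᶜ, ν (x - η) ≤ tailProb ν m₀ η (‖η‖ / 4) :=
  setIntegral_comp_sub_le_of_preimage_subset hν.nonneg hν.integrable
    (preimage_compl_triggerHalfspace_subset hη)

end IsProbDensity

variable {ν : Fin 2 → EuclideanSpace ℝ (Fin p) → ℝ} {lam ρ : ℝ}

theorem isProbDensity_muCl (hν : ∀ i, IsProbDensity (ν i)) (hlam : lam ∈ Icc (0:ℝ) 1) :
    IsProbDensity (muCl lam ν) :=
  (hν 1).mix (hν 0) hlam.1 (sub_nonneg.2 hlam.2) (add_sub_cancel _ _)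

theorem isProbDensity_muBd (hν : ∀ i, IsProbDensity (ν i)) (hlam : lam ∈ Icc (0:ℝ) 1) :
    IsProbDensity (muBd lam ν η) :=
  ((hν 1).comp_sub_const η).mix ((hν 0).comp_sub_const η) hlam.1 (sub_nonneg.2 hlam.2)
    (add_sub_cancel _ _)

theorem isProbDensity_muPoi (hν : ∀ i, IsProbDensity (ν i)) (hlam : lam ∈ Icc (0:ℝ) 1)
    (hρ : ρ ∈ Icc (0:ℝ) 1) : IsProbDensity (muPoi lam ρ ν η) :=
  (isProbDensity_muCl hν hlam).mix (isProbDensity_muBd hν hlam) (sub_nonneg.2 hρ.2) hρ.1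
    (sub_add_cancel _ _)

theorem muBd_le_inv_mul_muPoi (hν : ∀ i, IsProbDensity (ν i)) (hlam : lam ∈ Icc (0:ℝ) 1)
    (hρ : ρ ∈ Ioc (0:ℝ) 1) (x : EuclideanSpace ℝ (Fin p)) :
    muBd lam ν η x ≤ ρ⁻¹ * muPoi lam ρ ν η x := by
  rw [le_inv_mul_iff₀ hρ.1]
  exact le_add_of_nonneg_left
    (mul_nonneg (sub_nonneg.2 hρ.2) ((isProbDensity_muCl hν hlam).nonneg x))

theorem mul_nu_one_nonneg (hν : ∀ i, IsProbDensity (ν i)) (hlam : lam ∈ Icc (0:ℝ) 1)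
    (hρ : ρ ∈ Icc (0:ℝ) 1) (x : EuclideanSpace ℝ (Fin p)) : 0 ≤ (1 - ρ) * lam * ν 1 x :=
  mul_nonneg (mul_nonneg (sub_nonneg.2 hρ.2) hlam.1) ((hν 1).nonneg x)

theorem mul_nu_one_le_muPoi (hν : ∀ i, IsProbDensity (ν i)) (hlam : lam ∈ Icc (0:ℝ) 1)
    (hρ : ρ ∈ Icc (0:ℝ) 1) (x : EuclideanSpace ℝ (Fin p)) :
    (1 - ρ) * lam * ν 1 x ≤ muPoi lam ρ ν η x := by
  have h₀ := mul_nonneg (sub_nonneg.2 hρ.2) (mul_nonneg (sub_nonneg.2 hlam.2) ((hν 0).nonneg x))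
  have hbd := mul_nonneg hρ.1 ((isProbDensity_muBd (η := η) hν hlam).nonneg x)
  unfold muPoi muCl
  linarith

theorem fPoi_mem_Icc (hν : ∀ i, IsProbDensity (ν i)) (hlam : lam ∈ Icc (0:ℝ) 1)
    (hρ : ρ ∈ Icc (0:ℝ) 1) (x : EuclideanSpace ℝ (Fin p)) : fPoi lam ρ ν η x ∈ Icc (0:ℝ) 1 :=
  ⟨div_nonneg (mul_nu_one_nonneg hν hlam hρ x) ((isProbDensity_muPoi hν hlam hρ).nonneg x),
    div_le_one_of_le₀ (mul_nu_one_le_muPoi hν hlam hρ x)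
      ((isProbDensity_muPoi hν hlam hρ).nonneg x)⟩

theorem measurable_fPoi (hν : ∀ i, IsProbDensity (ν i)) (hlam : lam ∈ Icc (0:ℝ) 1)
    (hρ : ρ ∈ Icc (0:ℝ) 1) : Measurable (fPoi lam ρ ν η) :=
  ((hν 1).measurable.const_mul _).div (isProbDensity_muPoi hν hlam hρ).measurable

theorem fPoi_mul_muPoi (hν : ∀ i, IsProbDensity (ν i)) (hlam : lam ∈ Icc (0:ℝ) 1)
    (hρ : ρ ∈ Icc (0:ℝ) 1) (x : EuclideanSpace ℝ (Fin p)) :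
    fPoi lam ρ ν η x * muPoi lam ρ ν η x = (1 - ρ) * lam * ν 1 x :=
  div_mul_cancel_of_imp fun h =>
    le_antisymm (h ▸ mul_nu_one_le_muPoi hν hlam hρ x) (mul_nu_one_nonneg hν hlam hρ x)

theorem integrable_fPoi_mul_muBd (hν : ∀ i, IsProbDensity (ν i)) (hlam : lam ∈ Icc (0:ℝ) 1)
    (hρ : ρ ∈ Icc (0:ℝ) 1) : Integrable fun x => fPoi lam ρ ν η x * muBd lam ν η x :=
  (isProbDensity_muBd hν hlam).integrable.mul_of_mem_Icc (measurable_fPoi hν hlam hρ)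
    (fPoi_mem_Icc hν hlam hρ)

end Densities

section TailBound

variable {p : ℕ} {ν : Fin 2 → EuclideanSpace ℝ (Fin p) → ℝ} {m : Fin 2 → EuclideanSpace ℝ (Fin p)}
  {lam ρ : ℝ} {η : EuclideanSpace ℝ (Fin p)}

theorem tailProb_nonneg {ν : EuclideanSpace ℝ (Fin p) → ℝ} (hν : IsProbDensity ν)
    (m : EuclideanSpace ℝ (Fin p)) (r : ℝ) : 0 ≤ tailProb ν m η r :=
  integral_nonneg hν.nonneg

theorem setIntegral_compl_triggerHalfspace_muBd_le (hν : ∀ i, IsProbDensity (ν i))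
    (hlam : lam ∈ Icc (0:ℝ) 1) (hη : 4 * ⟪η, m 1 - m 0⟫ ≤ ‖η‖ ^ 2) :
    ∫ x in (triggerHalfspace (m 1) η)ᶜ, muBd lam ν η x ≤
      max (tailProb (ν 0) (m 0) η (‖η‖ / 4)) (tailProb (ν 1) (m 1) η (‖η‖ / 4)) := by
  have h₁ := (hν 1).setIntegral_compl_triggerHalfspace_comp_sub_le_tailProb
    (η := η) (m₀ := m 1) (m₁ := m 1) (by simp)
  have h₀ := (hν 0).setIntegral_compl_triggerHalfspace_comp_sub_le_tailProb hη
  have hint : ∀ i, IntegrableOn (fun x => ν i (x - η)) (triggerHalfspace (m 1) η)ᶜ :=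
    fun i => ((hν i).comp_sub_const η).integrable.integrableOn
  unfold muBd
  rw [integral_add ((hint 1).const_mul _) ((hint 0).const_mul _), integral_const_mul,
    integral_const_mul]
  nlinarith [le_max_left (tailProb (ν 0) (m 0) η (‖η‖ / 4)) (tailProb (ν 1) (m 1) η (‖η‖ / 4)),
    le_max_right (tailProb (ν 0) (m 0) η (‖η‖ / 4)) (tailProb (ν 1) (m 1) η (‖η‖ / 4)),
    hlam.1, hlam.2]

theorem setIntegral_triggerHalfspace_fPoi_mul_muBd_le (hν : ∀ i, IsProbDensity (ν i))
    (hlam : lam ∈ Icc (0:ℝ) 1) (hρ : ρ ∈ Ioc (0:ℝ) 1) :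
    ∫ x in triggerHalfspace (m 1) η, fPoi lam ρ ν η x * muBd lam ν η x ≤
      ρ⁻¹ * (1 - ρ) *
        max (tailProb (ν 0) (m 0) η (‖η‖ / 4)) (tailProb (ν 1) (m 1) η (‖η‖ / 4)) := by
  have hρ' : ρ ∈ Icc (0:ℝ) 1 := Ioc_subset_Icc_self hρ
  have hpt : ∀ x, fPoi lam ρ ν η x * muBd lam ν η x ≤ ρ⁻¹ * (1 - ρ) * (lam * ν 1 x) := fun x =>
    calc fPoi lam ρ ν η x * muBd lam ν η x
        ≤ fPoi lam ρ ν η x * (ρ⁻¹ * muPoi lam ρ ν η x) :=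
          mul_le_mul_of_nonneg_left (muBd_le_inv_mul_muPoi hν hlam hρ x)
            (fPoi_mem_Icc hν hlam hρ' x).1
      _ = ρ⁻¹ * (1 - ρ) * (lam * ν 1 x) := by
          rw [mul_left_comm, fPoi_mul_muPoi hν hlam hρ']; ring
  have htail : lam * ∫ x in triggerHalfspace (m 1) η, ν 1 x ≤
      max (tailProb (ν 0) (m 0) η (‖η‖ / 4)) (tailProb (ν 1) (m 1) η (‖η‖ / 4)) :=
    (mul_le_of_le_one_left (integral_nonneg (hν 1).nonneg) hlam.2).trans
      (((hν 1).setIntegral_triggerHalfspace_le_tailProb (m 1)).trans (le_max_right _ _))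
  calc ∫ x in triggerHalfspace (m 1) η, fPoi lam ρ ν η x * muBd lam ν η x
      ≤ ∫ x in triggerHalfspace (m 1) η, ρ⁻¹ * (1 - ρ) * (lam * ν 1 x) :=
        setIntegral_mono (integrable_fPoi_mul_muBd hν hlam hρ').integrableOn
          (((hν 1).integrable.const_mul lam).const_mul _).integrableOn hpt
    _ = ρ⁻¹ * (1 - ρ) * (lam * ∫ x in triggerHalfspace (m 1) η, ν 1 x) := by
        rw [integral_const_mul, integral_const_mul]
    _ ≤ _ := mul_le_mul_of_nonneg_left htail
        (mul_nonneg (inv_nonneg.2 hρ.1.le) (sub_nonneg.2 hρ.2))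

theorem integral_fPoi_mul_muBd_le (hν : ∀ i, IsProbDensity (ν i)) (hlam : lam ∈ Icc (0:ℝ) 1)
    (hρ : ρ ∈ Ioc (0:ℝ) 1) (hη : 4 * ⟪η, m 1 - m 0⟫ ≤ ‖η‖ ^ 2) :
    ∫ x, fPoi lam ρ ν η x * muBd lam ν η x ≤
      ρ⁻¹ * max (tailProb (ν 0) (m 0) η (‖η‖ / 4)) (tailProb (ν 1) (m 1) η (‖η‖ / 4)) := by
  set H := max (tailProb (ν 0) (m 0) η (‖η‖ / 4)) (tailProb (ν 1) (m 1) η (‖η‖ / 4))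
  have hρ' : ρ ∈ Icc (0:ℝ) 1 := Ioc_subset_Icc_self hρ
  have hbd := isProbDensity_muBd (η := η) hν hlam
  have hint := integrable_fPoi_mul_muBd (η := η) hν hlam hρ'
  have hcompl : ∫ x in (triggerHalfspace (m 1) η)ᶜ, fPoi lam ρ ν η x * muBd lam ν η x ≤ H :=
    (setIntegral_mono hint.integrableOn hbd.integrable.integrableOn fun x =>
      mul_le_of_le_one_left (hbd.nonneg x) (fPoi_mem_Icc hν hlam hρ' x).2).trans
      (setIntegral_compl_triggerHalfspace_muBd_le hν hlam hη)
  rw [← integral_add_compl (measurableSet_triggerHalfspace (m 1) η) hint]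
  calc _ ≤ ρ⁻¹ * (1 - ρ) * H + H :=
        add_le_add (setIntegral_triggerHalfspace_fPoi_mul_muBd_le hν hlam hρ) hcompl
    _ = ρ⁻¹ * H := by field_simp [hρ.1.ne']; ring

end TailBound

theorem backdoor_risk_upper_bound_general {p : ℕ}
    (ν : Fin 2 → EuclideanSpace ℝ (Fin p) → ℝ) (m : Fin 2 → EuclideanSpace ℝ (Fin p))
    (lam ρ : ℝ) (hlam : lam ∈ Set.Ioo (0:ℝ) 1) (hρ : ρ ∈ Set.Ioo (0:ℝ) 1)
    (hν : ∀ i, IsProbDensity (ν i))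
    (ℓ : ℝ → ℝ → ℝ) (C α : ℝ) (hC : 0 < C) (hα : α ∈ Set.Ioc (0:ℝ) 1)
    (hℓ : IsHolderLoss ℓ C α)
    (hℓnn : ∀ x ∈ Set.Icc (0:ℝ) 1, ∀ y ∈ Set.Icc (0:ℝ) 1, 0 ≤ ℓ x y)
    (η : EuclideanSpace ℝ (Fin p)) (hη : 4 * ⟪η, m 1 - m 0⟫ ≤ ‖η‖ ^ 2)
    (f : EuclideanSpace ℝ (Fin p) → ℝ) (hfmeas : Measurable f)
    (hf01 : ∀ x, f x ∈ Set.Icc (0:ℝ) 1) :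
    (∫ x, ℓ (f x) 0 * muBd lam ν η x) ≤
      ρ⁻¹ * (∫ x, ℓ (f x) (fPoi lam ρ ν η x) * muPoi lam ρ ν η x)
        + ρ ^ (-α) * C *
          (max (tailProb (ν 0) (m 0) η (‖η‖ / 4))
               (tailProb (ν 1) (m 1) η (‖η‖ / 4))) ^ α := by
  set H := max (tailProb (ν 0) (m 0) η (‖η‖ / 4)) (tailProb (ν 1) (m 1) η (‖η‖ / 4))
  have hlam' : lam ∈ Icc (0:ℝ) 1 := Ioo_subset_Icc_self hlam
  have hρ' : ρ ∈ Icc (0:ℝ) 1 := Ioo_subset_Icc_self hρ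
  have hbd := isProbDensity_muBd (η := η) hν hlam'
  have hg := measurable_fPoi (η := η) hν hlam' hρ'
  have hg01 := fPoi_mem_Icc (η := η) hν hlam' hρ'
  have hchange := integral_mul_le_const_mul_integral_mul (fun x => hℓnn _ (hf01 x) _ (hg01 x))
    (muBd_le_inv_mul_muPoi hν hlam' (Ioo_subset_Ioc_self hρ))
    (hℓ.integrable_mul hα.1 hbd.integrable hfmeas hg hf01 hg01)
    (hℓ.integrable_mul hα.1 (isProbDensity_muPoi hν hlam' hρ').integrable hfmeas hg hf01 hg01)
  have hjensen : ∫ x, fPoi lam ρ ν η x ^ α * muBd lam ν η x ≤ ρ ^ (-α) * H ^ α :=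
    calc _ ≤ (∫ x, fPoi lam ρ ν η x * muBd lam ν η x) ^ α :=
          integral_rpow_mul_le_rpow_integral_mul hα.1.le hα.2 hbd.measurable hbd.nonneg
            hbd.integral_eq_one hg hg01
      _ ≤ (ρ⁻¹ * H) ^ α :=
          rpow_le_rpow (integral_nonneg fun x => mul_nonneg (hg01 x).1 (hbd.nonneg x))
            (integral_fPoi_mul_muBd_le hν hlam' (Ioo_subset_Ioc_self hρ) hη) hα.1.le
      _ = ρ ^ (-α) * H ^ α := by
          have hH : 0 ≤ H := (tailProb_nonneg (hν 0) _ _).trans (le_max_left _ _)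
          rw [mul_rpow (inv_nonneg.2 hρ.1.le) hH, inv_rpow hρ.1.le, rpow_neg hρ.1.le]
  calc _ ≤ (∫ x, ℓ (f x) (fPoi lam ρ ν η x) * muBd lam ν η x)
        + C * ∫ x, fPoi lam ρ ν η x ^ α * muBd lam ν η x :=
        hℓ.integral_le_add_integral_rpow_mul hα.1 hbd.nonneg hbd.integrable hfmeas hg hf01 hg01
    _ ≤ _ := by linarith [mul_le_mul_of_nonneg_left hjensen hC.le]

/-- Theorem 1, backdoor-risk upper bound: under the monotone-density
assumption, a `(C,α)`-Hölder loss and `‖η‖₂² ≥ 4 ηᵀ(m₁-m₀)`, for every measurable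
`f : ℝ^p → [0,1]`,
`ℓ^bd(f) ≤ ρ⁻¹ ℓ^poi(f) + ρ^{-α} C (max_{i} h_i^η(‖η‖₂/4))^α`
(recall that the backdoor regression function is `f^bd_* ≡ 0`). -/
theorem backdoor_risk_upper_bound {p : ℕ} (hp : 1 ≤ p)
    (ν : Fin 2 → EuclideanSpace ℝ (Fin p) → ℝ) (m : Fin 2 → EuclideanSpace ℝ (Fin p))
    (lam ρ : ℝ) (hlam : lam ∈ Set.Ioo (0:ℝ) 1) (hρ : ρ ∈ Set.Ioo (0:ℝ) 1)
    (hν : ∀ i, IsProbDensity (ν i)) (hm : ∀ i, HasCondMean (ν i) (m i))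
    (hmono : ∀ i, MonotoneDensity (ν i) (m i))
    (ℓ : ℝ → ℝ → ℝ) (C α : ℝ) (hC : 0 < C) (hα : α ∈ Set.Ioc (0:ℝ) 1)
    (hℓ : IsHolderLoss ℓ C α)
    (hℓnn : ∀ x ∈ Set.Icc (0:ℝ) 1, ∀ y ∈ Set.Icc (0:ℝ) 1, 0 ≤ ℓ x y)
    (η : EuclideanSpace ℝ (Fin p)) (hη : 4 * ⟪η, m 1 - m 0⟫ ≤ ‖η‖ ^ 2)
    (f : EuclideanSpace ℝ (Fin p) → ℝ) (hfmeas : Measurable f)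
    (hf01 : ∀ x, f x ∈ Set.Icc (0:ℝ) 1) :
    (∫ x, ℓ (f x) 0 * muBd lam ν η x) ≤
      ρ⁻¹ * (∫ x, ℓ (f x) (fPoi lam ρ ν η x) * muPoi lam ρ ν η x)
        + ρ ^ (-α) * C *
          (max (tailProb (ν 0) (m 0) η (‖η‖ / 4))
               (tailProb (ν 1) (m 1) η (‖η‖ / 4))) ^ α :=
  backdoor_risk_upper_bound_general ν m lam ρ hlam hρ hν ℓ C α hC hα hℓ hℓnn η hη f hfmeas hf01

end
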